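/- arXiv:1310.2736 — 3 statements merged into one kernel-verified Lean document; each statement's English description precedes it below -/
import Mathlib

section
/- The set of tensors with TT ranks at most (r₁,...,r_{d-1}) is closed in the finite-dimensional tensor space: if a sequence U^(n) of tensors, each with rank(A^i(U^(n))) ≤ r_i for all i, converges to U, then rank(A^i(U)) ≤ r_i for all i. -/
/-!
Rank at least `k` is an open condition on matrices: through `Matrix.toLin'` it is the open
condition `k ≤ rank` on continuous linear maps, which holds because a linearly independent
family stays independent under small perturbations. Hence `{A | rank A ≤ r}` is closed, and
each matricization `U ↦ A^i(U)` is continuous (it only permutes coordinates), so the set of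
tensors with `rank A^i(U) ≤ r_i` is closed as well.
-/

open Filter Topology

/-- The `i`-th matricization `A^i` of a tensor `U`, grouping the indices `(x₁,…,x_i)` into
the row index and `(x_{i+1},…,x_d)` into the column index. -/
def matricize {d : ℕ} {n : Fin d → ℕ} {K : Type*} [Field K]
    (U : ((j : Fin d) → Fin (n j)) → K) (i : ℕ) :
    Matrix ((j : {j : Fin d // j.val < i}) → Fin (n j.1))
           ((j : {j : Fin d // ¬ j.val < i}) → Fin (n j.1)) K :=
  fun y z => U (fun j => if h : j.val < i then y ⟨j, h⟩ else z ⟨j, h⟩)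

namespace Matrix

variable {m n 𝕜 : Type*} [Fintype m] [Fintype n] [NontriviallyNormedField 𝕜] [CompleteSpace 𝕜]

theorem isOpen_setOf_nat_le_rank (k : ℕ) : IsOpen {A : Matrix m n 𝕜 | k ≤ A.rank} := by
  classical
  let toCLM : Matrix m n 𝕜 →ₗ[𝕜] (n → 𝕜) →L[𝕜] (m → 𝕜) :=
    LinearMap.toContinuousLinearMap.toLinearMap ∘ₗ Matrix.toLin'.toLinearMap
  have rank_toCLM (A : Matrix m n 𝕜) :
      (toCLM A : (n → 𝕜) →ₗ[𝕜] (m → 𝕜)).rank = A.rank :=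
    (Module.finrank_eq_rank ..).symm
  convert (isOpen_setOfPred_nat_le_rank k).preimage toCLM.continuous_of_finiteDimensional using 2
  simp [rank_toCLM]

theorem isClosed_setOf_rank_le (k : ℕ) : IsClosed {A : Matrix m n 𝕜 | A.rank ≤ k} := by
  simpa only [← isOpen_compl_iff, Set.compl_ofPred, not_le, Nat.lt_iff_add_one_le]
    using isOpen_setOf_nat_le_rank (k + 1)

end Matrix

theorem continuous_matricize {d : ℕ} {n : Fin d → ℕ} {K : Type*} [Field K] [TopologicalSpace K]
    (i : ℕ) : Continuous fun U : ((j : Fin d) → Fin (n j)) → K => matricize U i :=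
  continuous_pi fun _ => continuous_pi fun _ => continuous_apply _

/-- The set of tensors with TT ranks (ranks of all matricizations) at most `(r₁,…,r_{d-1})`
is closed: if tensors `U⁽ⁿ⁾` with `rank A^i(U⁽ⁿ⁾) ≤ r_i` for all `i` converge to `U`, then
`rank A^i(U) ≤ r_i` for all `i`. -/
theorem tt_rank_bounded_set_closed {d : ℕ} {n : Fin d → ℕ}
    (Useq : ℕ → (((j : Fin d) → Fin (n j)) → ℝ)) (U : ((j : Fin d) → Fin (n j)) → ℝ)
    (r : ℕ → ℕ)
    (hrank : ∀ m : ℕ, ∀ i, 1 ≤ i → i < d → (matricize (Useq m) i).rank ≤ r i)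
    (hconv : Tendsto Useq atTop (𝓝 U)) :
    ∀ i, 1 ≤ i → i < d → (matricize U i).rank ≤ r i := fun i hi hid =>
  (Matrix.isClosed_setOf_rank_le (r i)).mem_of_tendsto
    (((continuous_matricize i).tendsto U).comp hconv)
    (Eventually.of_forall fun m => hrank m i hi hid)
end

section
/- For a normalized tensor (‖U‖ = 1), truncating the singular values of the matricization A^i at rank r gives squared error Σ_{k>r} σ_{i,k}², which is bounded by ( Σ_k σ_{i,k}^{2ω} )^{1/ω} · r^{1−1/ω} for any 0 < ω < 1 when the singular values are nonincreasing. -/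
/-!
Let `S = ∑ σ_k^p`. Since `σ` is nonincreasing, the first `r` terms of `S` each dominate
`σ_r^p`, so `σ_r^p ≤ S / r`. Every tail term satisfies `σ_k^q ≤ σ_k^p σ_r^(q-p)`, hence
`∑_{k ≥ r} σ_k^q ≤ S σ_r^(q-p) ≤ S (S / r)^((q-p)/p) = S^(q/p) r^(1-q/p)`.
With `p = 2ω` and `q = 2` this is the claimed bound.
-/

open Real

lemma rpow_le_rpow_mul_rpow_sub {x y p q : ℝ} (hy : 0 ≤ y) (hyx : y ≤ x) (hp : 0 < p)
    (hpq : p ≤ q) : y ^ q ≤ y ^ p * x ^ (q - p) := by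
  calc y ^ q = y ^ p * y ^ (q - p) := by
        rw [← rpow_add' hy (by rw [add_sub_cancel]; linarith), add_sub_cancel]
    _ ≤ y ^ p * x ^ (q - p) := by gcongr

lemma natCast_mul_rpow_le_tsum_of_antitone {σ : ℕ → ℝ} (hmono : Antitone σ)
    (hpos : ∀ k, 0 ≤ σ k) {p : ℝ} (hp : 0 ≤ p) (hsum : Summable fun k ↦ σ k ^ p) (r : ℕ) :
    (r : ℝ) * σ r ^ p ≤ ∑' k, σ k ^ p :=
  calc (r : ℝ) * σ r ^ p = ∑ _j ∈ Finset.range r, σ r ^ p := by simp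
    _ ≤ ∑ j ∈ Finset.range r, σ j ^ p := Finset.sum_le_sum fun j hj ↦
        rpow_le_rpow (hpos r) (hmono (Finset.mem_range.mp hj).le) hp
    _ ≤ ∑' k, σ k ^ p := hsum.sum_le_tsum _ fun k _ ↦ rpow_nonneg (hpos k) _

lemma tsum_tail_rpow_le_tsum_mul_of_antitone {σ : ℕ → ℝ} (hmono : Antitone σ)
    (hpos : ∀ k, 0 ≤ σ k) {p q : ℝ} (hp : 0 < p) (hpq : p ≤ q)
    (hsum : Summable fun k ↦ σ k ^ p) (r : ℕ) :
    ∑' k, σ (k + r) ^ q ≤ (∑' k, σ k ^ p) * σ r ^ (q - p) := by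
  have hterm (k : ℕ) : σ (k + r) ^ q ≤ σ (k + r) ^ p * σ r ^ (q - p) :=
    rpow_le_rpow_mul_rpow_sub (hpos _) (hmono (Nat.le_add_left r k)) hp hpq
  have htail : Summable fun k ↦ σ (k + r) ^ p := (summable_nat_add_iff r).mpr hsum
  have hdom : Summable fun k ↦ σ (k + r) ^ p * σ r ^ (q - p) := htail.mul_right _
  have htail_le : ∑' k, σ (k + r) ^ p ≤ ∑' k, σ k ^ p :=
    htail.tsum_le_tsum_of_inj (· + r) (add_left_injective r)
      (fun k _ ↦ rpow_nonneg (hpos k) _) (fun _ ↦ le_rfl) hsum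
  calc ∑' k, σ (k + r) ^ q ≤ ∑' k, σ (k + r) ^ p * σ r ^ (q - p) :=
        (hdom.of_nonneg_of_le (fun _ ↦ rpow_nonneg (hpos _) _) hterm).tsum_le_tsum hterm hdom
    _ = (∑' k, σ (k + r) ^ p) * σ r ^ (q - p) := tsum_mul_right
    _ ≤ (∑' k, σ k ^ p) * σ r ^ (q - p) := by gcongr; exact rpow_nonneg (hpos r) _

lemma rpow_mul_div_rpow_eq {S r p q : ℝ} (hS : 0 ≤ S) (hr : 0 ≤ r) (hp : 0 < p) (hq : 0 < q) :
    S * (S / r) ^ ((q - p) / p) = S ^ (q / p) * r ^ (1 - q / p) := by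
  have hqp : q / p = 1 + (q - p) / p := by field_simp; ring
  rw [div_rpow hS hr, hqp, rpow_add' hS (by rw [← hqp]; positivity), rpow_one,
    show 1 - (1 + (q - p) / p) = -((q - p) / p) by ring, rpow_neg hr]
  ring

/-- Stechkin's estimate. -/
theorem tsum_tail_rpow_le_of_antitone {σ : ℕ → ℝ} (hmono : Antitone σ) (hpos : ∀ k, 0 ≤ σ k)
    {p q : ℝ} (hp : 0 < p) (hpq : p ≤ q) (hsum : Summable fun k ↦ σ k ^ p) {r : ℕ} (hr : 0 < r) :
    ∑' k, σ (k + r) ^ q ≤ (∑' k, σ k ^ p) ^ (q / p) * (r : ℝ) ^ (1 - q / p) := by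
  set S := ∑' k, σ k ^ p
  have hrR : (0 : ℝ) < r := Nat.cast_pos.mpr hr
  have hS : 0 ≤ S := tsum_nonneg fun k ↦ rpow_nonneg (hpos k) _
  have hσr : σ r ^ p ≤ S / r := by
    rw [le_div_iff₀ hrR, mul_comm]
    exact natCast_mul_rpow_le_tsum_of_antitone hmono hpos hp.le hsum r
  have hσr' : σ r ^ (q - p) ≤ (S / r) ^ ((q - p) / p) := by
    calc σ r ^ (q - p) = (σ r ^ p) ^ ((q - p) / p) := by
          rw [← rpow_mul (hpos r), mul_div_cancel₀ _ hp.ne']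
      _ ≤ (S / r) ^ ((q - p) / p) := by
          gcongr
          exact rpow_nonneg (hpos r) _
  calc ∑' k, σ (k + r) ^ q ≤ S * σ r ^ (q - p) :=
        tsum_tail_rpow_le_tsum_mul_of_antitone hmono hpos hp hpq hsum r
    _ ≤ S * (S / r) ^ ((q - p) / p) := by gcongr
    _ = S ^ (q / p) * (r : ℝ) ^ (1 - q / p) :=
        rpow_mul_div_rpow_eq hS hrR.le hp (hp.trans_le hpq)

theorem svd_tail_renyi_bound_general (σ : ℕ → ℝ) (ω : ℝ) (r : ℕ)
    (hmono : Antitone σ) (hpos : ∀ k, 0 ≤ σ k)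
    (hω0 : 0 < ω) (hω1 : ω < 1) (hr : 1 ≤ r)
    (hsum : Summable fun k : ℕ => σ k ^ (2 * ω)) :
    ∑' k : ℕ, σ (k + r) ^ 2 ≤
      (∑' k : ℕ, σ k ^ (2 * ω)) ^ (1 / ω) * (r : ℝ) ^ (1 - 1 / ω) := by
  have h := tsum_tail_rpow_le_of_antitone hmono hpos (by positivity) (q := 2)
    (by linarith) hsum hr
  have hexp : (2 : ℝ) / (2 * ω) = 1 / ω := by field_simp
  simpa only [rpow_two, hexp] using h

/-- Stechkin-type tail bound for SVD truncation of the matricization `A^i` of a normalized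
tensor: if the singular values `σ_k` are nonincreasing, nonnegative, and normalized
(`Σ_k σ_k² = 1`, i.e. `‖U‖ = 1`), then for `0 < ω < 1` the squared error of truncation at
rank `r ≥ 1`, namely `Σ_{k > r} σ_k²`, is bounded by `(Σ_k σ_k^{2ω})^{1/ω} · r^{1−1/ω}`. -/
theorem svd_tail_renyi_bound (σ : ℕ → ℝ) (ω : ℝ) (r : ℕ)
    (hmono : Antitone σ) (hpos : ∀ k, 0 ≤ σ k)
    (hω0 : 0 < ω) (hω1 : ω < 1) (hr : 1 ≤ r)
    (hnorm : ∑' k : ℕ, σ k ^ 2 = 1)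
    (hsum : Summable fun k : ℕ => σ k ^ (2 * ω)) :
    ∑' k : ℕ, σ (k + r) ^ 2 ≤
      (∑' k : ℕ, σ k ^ (2 * ω)) ^ (1 / ω) * (r : ℝ) ^ (1 - 1 / ω) :=
  svd_tail_renyi_bound_general σ ω r hmono hpos hω0 hω1 hr hsum
end

section
/- The coupled cluster parametrization is bijective: the map t ↦ e^{T(t)} c₀ is a bijection from coefficient vectors (t_β)_{β∈I} onto the affine set { c₀ + c* : c* ⊥ c₀, c* ∈ span of excited determinants }, i.e. every vector c with ⟨c₀, c⟩ = 1 in the N-particle Full CI space has a unique representation c = e^{T(t)} c₀. -/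
open NormedSpace Finset
open scoped InnerProductSpace Nat

/-!
Write `T t = ∑ β, t β • X β`. The `X β` commute and are nilpotent, hence so is every `T t`, with
`T t ^ dim E = 0`; so `exp (T t) = ∑_{k < dim E} T t ^ k / k!` depends polynomially on `t`, and
expanding `T t ^ (k + 1)` into products of the `X β` shows `exp (T t) c₀ - c₀ ⊥ c₀`.
Since the `X β c₀` span `c₀ᗮ`, a vector `c` with `⟪c₀, c⟫ = 1` is determined by its coordinates
`⟪X β c₀, c⟫`, so the claim is that the polynomial map `t ↦ (⟪X β c₀, exp (T t) c₀⟫)_β` is a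
bijection of `ℂ^ι`. It is injective: `exp (T t) c₀ = exp (T s) c₀` gives `exp N c₀ = c₀` for
`N = T (t - s)`, and `exp N - 1 = u * N` with `u` a unit, so `N c₀ = ∑ (t - s)_β • X β c₀ = 0`
and `t = s` by linear independence. By Ax–Grothendieck it is then surjective.
-/

section LinearCombination

variable {R A ι : Type*} [CommSemiring R] [Semiring A] [Algebra R A] [Fintype ι]

theorem Fintype.linearCombination_pow (X : ι → A) (t : ι → R) (k : ℕ) :
    Fintype.linearCombination R X t ^ k =
      ∑ g : Fin k → ι, (∏ i, t (g i)) • (List.ofFn fun i => X (g i)).prod := by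
  classical
  have h := (MultilinearMap.mkPiAlgebraFin R k A).map_sum fun (_ : Fin k) β => t β • X β
  simpa [MultilinearMap.map_smul_univ, Fintype.linearCombination_apply, List.ofFn_const,
    List.prod_replicate] using h

theorem Fintype.commute_linearCombination {X : ι → A} (hX : ∀ α β, Commute (X α) (X β))
    (s t : ι → R) :
    Commute (Fintype.linearCombination R X s) (Fintype.linearCombination R X t) := by
  simp only [Fintype.linearCombination_apply]
  exact .sum_left _ _ _ fun α _ => .sum_right _ _ _ fun β _ =>
    ((hX α β).smul_left _).smul_right _

theorem Fintype.isNilpotent_linearCombination {X : ι → A} (hX : ∀ α β, Commute (X α) (X β))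
    (hnil : ∀ β, IsNilpotent (X β)) (t : ι → R) :
    IsNilpotent (Fintype.linearCombination R X t) :=
  Commute.isNilpotent_sum (fun β _ => (hnil β).smul (t β))
    fun α β _ _ => ((hX α β).smul_left _).smul_right _

theorem exists_eval_eq_linearCombination_pow (ℓ : A →ₗ[R] R) (X : ι → A) (k : ℕ) :
    ∃ p : MvPolynomial ι R, ∀ t,
      MvPolynomial.eval t p = ℓ (Fintype.linearCombination R X t ^ k) :=
  ⟨∑ g : Fin k → ι,
      MvPolynomial.C (ℓ (List.ofFn fun i => X (g i)).prod) * ∏ i, MvPolynomial.X (g i),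
    fun t => by simp [Fintype.linearCombination_pow, mul_comm]⟩

end LinearCombination

theorem ContinuousLinearMap.pow_finrank_eq_zero_of_isNilpotent {𝕜 E : Type*}
    [NontriviallyNormedField 𝕜] [NormedAddCommGroup E] [NormedSpace 𝕜 E] [FiniteDimensional 𝕜 E]
    {f : E →L[𝕜] E} (hf : IsNilpotent f) : f ^ Module.finrank 𝕜 E = 0 := by
  have h : (f : E →ₗ[𝕜] E).charpoly = Polynomial.X ^ Module.finrank 𝕜 E :=
    (hf.map (ContinuousLinearMap.toLinearMapRingHom (R₁ := 𝕜))).charpoly_eq_X_pow_finrank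
  apply ContinuousLinearMap.coe_injective
  simpa [h] using LinearMap.aeval_self_charpoly (f : E →ₗ[𝕜] E)

section Exp

variable {A : Type*} [Ring A] [TopologicalSpace A] [IsTopologicalRing A]

theorem NormedSpace.exp_eq_sum_range_of_pow_eq_zero (𝕂 : Type*) [Field 𝕂] [CharZero 𝕂]
    [Algebra 𝕂 A] {x : A} {n : ℕ} (hx : x ^ n = 0) :
    exp x = ∑ k ∈ range n, (k ! : 𝕂)⁻¹ • x ^ k := by
  rw [exp_eq_tsum 𝕂]
  exact tsum_eq_sum fun k hk => by
    rw [pow_eq_zero_of_le (not_lt.mp (mt mem_range.mpr hk)) hx, smul_zero]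

theorem IsNilpotent.exists_isUnit_exp_sub_one_eq_mul (𝕂 : Type*) [Field 𝕂] [CharZero 𝕂]
    [Algebra 𝕂 A] {x : A} (hx : IsNilpotent x) :
    ∃ u, IsUnit u ∧ NormedSpace.exp x - 1 = u * x := by
  obtain ⟨n, hn⟩ := hx
  refine ⟨∑ k ∈ range (n + 1), ((k + 1)! : 𝕂)⁻¹ • x ^ k, ?_, ?_⟩
  · rw [sum_range_succ']
    simp only [zero_add, Nat.factorial_one, Nat.cast_one, inv_one, pow_zero, one_smul]
    refine IsNilpotent.isUnit_add_one (Commute.isNilpotent_sum (fun k _ => ?_) fun i j _ _ => ?_)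
    · exact (IsNilpotent.pow_succ k ⟨n, hn⟩).smul _
    · exact (((Commute.refl x).pow_pow _ _).smul_left _).smul_right _
  · rw [exp_eq_sum_range_of_pow_eq_zero 𝕂 (pow_eq_zero_of_le (n.le_add_right 2) hn),
      sum_range_succ', sum_mul]
    simp [← _root_.pow_succ]

end Exp

theorem exists_eval_eq_exp_linearCombination {𝕂 A ι : Type*} [Field 𝕂] [CharZero 𝕂] [Ring A]
    [Algebra 𝕂 A] [TopologicalSpace A] [IsTopologicalRing A] [Fintype ι]
    (ℓ : A →ₗ[𝕂] 𝕂) (X : ι → A) {n : ℕ} (hn : ∀ t, Fintype.linearCombination 𝕂 X t ^ n = 0) :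
    ∃ p : MvPolynomial ι 𝕂, ∀ t,
      MvPolynomial.eval t p = ℓ (exp (Fintype.linearCombination 𝕂 X t)) := by
  choose q hq using exists_eval_eq_linearCombination_pow ℓ X
  refine ⟨∑ k ∈ range n, MvPolynomial.C (k ! : 𝕂)⁻¹ * q k, fun t => ?_⟩
  simp [exp_eq_sum_range_of_pow_eq_zero 𝕂 (hn t), hq]

theorem eq_of_inner_eq_of_span_eq_orthogonal {𝕜 E ι : Type*} [RCLike 𝕜] [NormedAddCommGroup E]
    [InnerProductSpace 𝕜 E] [Fintype ι] {u : E} {e : ι → E}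
    (hspan : Submodule.span 𝕜 (Set.range e) = (𝕜 ∙ u)ᗮ) {v w : E} (hu : ⟪u, v⟫_𝕜 = ⟪u, w⟫_𝕜)
    (he : ∀ i, ⟪e i, v⟫_𝕜 = ⟪e i, w⟫_𝕜) : v = w := by
  have hmem : v - w ∈ Submodule.span 𝕜 (Set.range e) := by
    rw [hspan, Submodule.mem_orthogonal_singleton_iff_inner_right, inner_sub_right, hu, sub_self]
  obtain ⟨a, ha⟩ := (Submodule.mem_span_range_iff_exists_fun 𝕜).mp hmem
  rw [← sub_eq_zero, ← inner_self_eq_zero (𝕜 := 𝕜)]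
  nth_rw 1 [← ha]
  simp [sum_inner, inner_smul_left, inner_sub_right, he]

section ClusterOperator

variable {𝕜 E ι : Type*} [RCLike 𝕜] [NormedAddCommGroup E] [NormedSpace 𝕜 E] [Fintype ι]
  {X : ι → E →L[𝕜] E} {v : E}

theorem linearCombination_pow_succ_apply_mem {K : Submodule 𝕜 E}
    (hprod : ∀ L : List ι, L ≠ [] → (L.map X).prod v ∈ K) (t : ι → 𝕜) (k : ℕ) :
    (Fintype.linearCombination 𝕜 X t ^ (k + 1)) v ∈ K := by
  rw [Fintype.linearCombination_pow, _root_.sum_apply]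
  refine K.sum_mem fun g _ => K.smul_mem _ ?_
  have h := hprod (List.ofFn g) (by simp)
  rwa [List.map_ofFn] at h

theorem exp_linearCombination_apply_sub_mem {K : Submodule 𝕜 E}
    (hcomm : ∀ α β, Commute (X α) (X β)) (hnil : ∀ β, IsNilpotent (X β))
    (hprod : ∀ L : List ι, L ≠ [] → (L.map X).prod v ∈ K) (t : ι → 𝕜) :
    exp (Fintype.linearCombination 𝕜 X t) v - v ∈ K := by
  obtain ⟨n, hn⟩ := Fintype.isNilpotent_linearCombination hcomm hnil t
  rw [exp_eq_sum_range_of_pow_eq_zero 𝕜 (pow_eq_zero_of_le n.le_succ hn), sum_range_succ']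
  simpa using K.sum_mem fun k _ =>
    K.smul_mem _ (linearCombination_pow_succ_apply_mem hprod t k)

theorem exp_linearCombination_apply_injective [CompleteSpace E]
    (hcomm : ∀ α β, Commute (X α) (X β)) (hnil : ∀ β, IsNilpotent (X β))
    (hind : LinearIndependent 𝕜 fun β => X β v) :
    Function.Injective fun t => exp (Fintype.linearCombination 𝕜 X t) v := by
  -- `exp_add_of_commute` and `isUnit_exp` are stated for normed `ℚ`-algebras
  let +nondep : NormedAlgebra ℚ (E →L[𝕜] E) := .restrictScalars ℚ 𝕜 _
  intro t s hts
  set T := Fintype.linearCombination 𝕜 X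
  have hfix : exp (T (t - s)) v = v := by
    have hsplit : exp (T t) = exp (T s) * exp (T (t - s)) := by
      rw [← exp_add_of_commute (Fintype.commute_linearCombination hcomm _ _), ← map_add,
        add_sub_cancel]
    exact (ContinuousLinearMap.isUnit_iff_bijective.mp (isUnit_exp _)).injective
      (by simpa [hsplit] using hts)
  obtain ⟨u, hu, hexp⟩ :=
    (Fintype.isNilpotent_linearCombination hcomm hnil (t - s)).exists_isUnit_exp_sub_one_eq_mul 𝕜
  have hkill : T (t - s) v = 0 := by
    apply (ContinuousLinearMap.isUnit_iff_bijective.mp hu).injective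
    calc u (T (t - s) v) = (exp (T (t - s)) - 1) v := by rw [hexp]; rfl
      _ = u 0 := by rw [sub_apply, hfix, one_apply_eq_self, sub_self, map_zero]
  refine sub_eq_zero.mp (hind.fintypeLinearCombination_injective ?_)
  simpa [T, Fintype.linearCombination_apply] using hkill

end ClusterOperator

/-- Bijectivity of the coupled cluster parametrization: in the finite-dimensional Full CI
space `E` with normalized reference `c₀`, if the excitation operators `X_β` are mutually
commuting and nilpotent, map `c₀` onto an orthonormal basis of the orthogonal complement
of `c₀`, and every nonempty product of them maps `c₀` into that orthogonal complement,
then `t ↦ e^{T(t)} c₀` (with `T(t) = Σ_β t_β X_β`) is a bijection onto the affine set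
`{c : ⟨c₀, c⟩ = 1}`: every such `c` has a unique representation `c = e^{T(t)} c₀`. -/
theorem coupled_cluster_parametrization_bijective
    {E : Type*} [NormedAddCommGroup E] [InnerProductSpace ℂ E] [FiniteDimensional ℂ E]
    (c₀ : E) (hc₀ : ‖c₀‖ = 1)
    {ι : Type*} [Fintype ι] (X : ι → E →L[ℂ] E)
    (hcomm : ∀ α β, X α * X β = X β * X α)
    (hnil : ∀ β, IsNilpotent (X β))
    (hbasis : Orthonormal ℂ (fun β => X β c₀))
    (hspan : Submodule.span ℂ (Set.range fun β => X β c₀) = (ℂ ∙ c₀)ᗮ)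
    (hprod : ∀ L : List ι, L ≠ [] → ((L.map X).prod) c₀ ∈ (ℂ ∙ c₀)ᗮ) :
    (∀ t : ι → ℂ, ⟪c₀, exp (∑ β, t β • X β) c₀⟫_ℂ = 1) ∧
    (∀ c : E, ⟪c₀, c⟫_ℂ = 1 → ∃! t : ι → ℂ, exp (∑ β, t β • X β) c₀ = c) := by
  simp only [← Fintype.linearCombination_apply]
  have hinner (t : ι → ℂ) : ⟪c₀, exp (Fintype.linearCombination ℂ X t) c₀⟫_ℂ = 1 := by
    have h := exp_linearCombination_apply_sub_mem hcomm hnil hprod t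
    rw [Submodule.mem_orthogonal_singleton_iff_inner_right, inner_sub_right, sub_eq_zero] at h
    rw [h, inner_self_eq_norm_sq_to_K, hc₀]
    simp
  have hinj := exp_linearCombination_apply_injective hcomm hnil hbasis.linearIndependent
  choose p hp using fun β => exists_eval_eq_exp_linearCombination
    ((innerSL ℂ (X β c₀)).comp (ContinuousLinearMap.apply ℂ E c₀) : (E →L[ℂ] E) →ₗ[ℂ] ℂ) X
    fun t => ContinuousLinearMap.pow_finrank_eq_zero_of_isNilpotent
      (Fintype.isNilpotent_linearCombination hcomm hnil t)
  have hpinj : Function.Injective fun t β => MvPolynomial.eval t (p β) := fun t s h =>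
    hinj (eq_of_inner_eq_of_span_eq_orthogonal hspan ((hinner t).trans (hinner s).symm)
      fun β => by simpa [hp] using congrFun h β)
  refine ⟨hinner, fun c hc => ?_⟩
  obtain ⟨t, ht⟩ := ax_grothendieck_univ p hpinj fun β => ⟪X β c₀, c⟫_ℂ
  have htc : exp (Fintype.linearCombination ℂ X t) c₀ = c :=
    eq_of_inner_eq_of_span_eq_orthogonal hspan ((hinner t).trans hc.symm)
      fun β => by simpa [hp] using congrFun ht β
  exact ⟨t, htc, fun s hs => hinj (hs.trans htc.symm)⟩
end
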